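/- Define ψ^n(p) = Σ_{k=0}^n (C(n,k) p^k (1-p)^{n-k})^2 and, for 0 ≤ u ≤ n/4, set p^n(u) = (1 - sqrt(1 - 4u/n))/2 and φ^n(u) = ψ^n(p^n(u)). Then φ^n(u) = (1/2π) · ∫_0^{2π} [1 - 2u(1 - cos θ)/n]^n dθ. -/

import Mathlib

/-!
Since `p² + q² + 2pq cos θ = |p e^{iθ} + q|²`, the `n`-th power of it is `|(p e^{iθ} + q)ⁿ|²`,
a trigonometric polynomial whose Fourier coefficients are the binomial terms `C(n,k) pᵏ qⁿ⁻ᵏ`.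
Orthogonality of the `e^{ikθ}` on `[0, 2π]` turns its integral into `2π` times the sum of their
squares. With `q = 1 - p` and `p = pⁿ(u)`, so that `p(1 - p) = u/n`, the integrand becomes
`1 - 2u(1 - cos θ)/n`.
-/

open Real

/-- `ψⁿ(p) = Σ_{k=0}^n (C(n,k) pᵏ (1-p)ⁿ⁻ᵏ)²`. -/
noncomputable def psi (n : ℕ) (p : ℝ) : ℝ :=
  ∑ k ∈ Finset.range (n + 1), ((n.choose k : ℝ) * p ^ k * (1 - p) ^ (n - k)) ^ 2

/-- `pⁿ(u) = (1 - √(1 - 4u/n))/2`, a root of `p(1-p) = u/n`. -/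
noncomputable def pn (n : ℕ) (u : ℝ) : ℝ := (1 - Real.sqrt (1 - 4 * u / n)) / 2

/-- `φⁿ(u) = ψⁿ(pⁿ(u))`. -/
noncomputable def phi (n : ℕ) (u : ℝ) : ℝ := psi n (pn n u)

open Finset

lemma integral_exp_int_mul_mul_I (m : ℤ) :
    ∫ θ in (0 : ℝ)..2 * π, Complex.exp (m * θ * Complex.I) = if m = 0 then 2 * π else 0 := by
  split_ifs with hm
  · simp [hm]
  · have hc : (m : ℂ) * Complex.I ≠ 0 := by simp [hm]
    simp_rw [mul_right_comm _ _ Complex.I]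
    rw [integral_exp_mul_complex hc, mul_right_comm, mul_assoc, Complex.ofReal_mul,
      Complex.ofReal_ofNat, Complex.exp_int_mul_two_pi_mul_I]
    simp

lemma integral_sum_exp_mul_sum_exp_neg (s : Finset ℕ) (a b : ℕ → ℂ) :
    ∫ θ in (0 : ℝ)..2 * π, (∑ k ∈ s, a k * Complex.exp (k * (θ * Complex.I))) *
        ∑ j ∈ s, b j * Complex.exp (j * -(θ * Complex.I)) =
      2 * π * ∑ k ∈ s, a k * b k := by
  have hterm : ∀ k j : ℕ, ∫ θ in (0 : ℝ)..2 * π,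
      a k * Complex.exp (k * (θ * Complex.I)) * (b j * Complex.exp (j * -(θ * Complex.I))) =
        if j = k then 2 * π * (a k * b k) else 0 := by
    intro k j
    have hexp : ∀ θ : ℝ, a k * Complex.exp (k * (θ * Complex.I)) *
        (b j * Complex.exp (j * -(θ * Complex.I))) =
          a k * b j * Complex.exp (((k - j : ℤ) : ℂ) * θ * Complex.I) := by
      intro θ
      rw [mul_mul_mul_comm, ← Complex.exp_add]
      push_cast
      ring_nf
    simp_rw [hexp, intervalIntegral.integral_const_mul, integral_exp_int_mul_mul_I]
    by_cases hjk : j = k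
    · simp [hjk, mul_comm]
    · simp [hjk, sub_eq_zero, Ne.symm hjk]
  simp_rw [sum_mul_sum]
  rw [intervalIntegral.integral_finsetSum fun k _ =>
    (by fun_prop : Continuous _).intervalIntegrable _ _, mul_sum]
  refine sum_congr rfl fun k hk => ?_
  rw [intervalIntegral.integral_finsetSum fun j _ =>
    (by fun_prop : Continuous _).intervalIntegrable _ _]
  simp_rw [hterm, sum_ite_eq' s k, if_pos hk]

lemma ofReal_sq_add_sq_add_two_mul_mul_cos (p q θ : ℝ) :
    ((p ^ 2 + q ^ 2 + 2 * p * q * cos θ : ℝ) : ℂ) =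
      (p * Complex.exp (θ * Complex.I) + q) * (p * Complex.exp (-(θ * Complex.I)) + q) := by
  rw [show -((θ : ℂ) * Complex.I) = (-θ : ℂ) * Complex.I by ring, Complex.exp_mul_I,
    Complex.exp_mul_I, Complex.sin_neg, Complex.cos_neg]
  push_cast [Complex.ofReal_cos]
  linear_combination (-(p : ℂ) ^ 2) * Complex.sin_sq_add_cos_sq (θ : ℂ) +
    (p : ℂ) ^ 2 * Complex.sin θ ^ 2 * Complex.I_sq

lemma add_pow_ofReal_mul_exp (n : ℕ) (p q : ℝ) (z : ℂ) :
    (p * Complex.exp z + q) ^ n =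
      ∑ k ∈ range (n + 1), ((n.choose k * p ^ k * q ^ (n - k) : ℝ) : ℂ) * Complex.exp (k * z) := by
  rw [add_pow]
  refine sum_congr rfl fun k _ => ?_
  rw [Complex.exp_nat_mul]
  push_cast
  ring

lemma integral_pow_sq_add_sq_add_two_mul_mul_cos (n : ℕ) (p q : ℝ) :
    ∫ θ in (0 : ℝ)..2 * π, (p ^ 2 + q ^ 2 + 2 * p * q * cos θ) ^ n =
      2 * π * ∑ k ∈ range (n + 1), ((n.choose k : ℝ) * p ^ k * q ^ (n - k)) ^ 2 := by
  apply Complex.ofReal_injective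
  rw [← intervalIntegral.integral_ofReal]
  simp_rw [Complex.ofReal_pow, ofReal_sq_add_sq_add_two_mul_mul_cos, mul_pow,
    add_pow_ofReal_mul_exp, integral_sum_exp_mul_sum_exp_neg]
  push_cast
  exact congrArg _ (sum_congr rfl fun k _ => by ring)

lemma pn_mul_one_sub_pn {n : ℕ} {u : ℝ} (hun : u ≤ n / 4) : pn n u * (1 - pn n u) = u / n := by
  rcases (Nat.cast_nonneg n : (0 : ℝ) ≤ n).eq_or_lt with hn | hn
  · -- junk values: `u / 0 = 0` and `pn 0 u = 0`
    simp [pn, ← hn]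
  · have hsq := Real.sq_sqrt (show 0 ≤ 1 - 4 * u / n by
      rw [sub_nonneg, div_le_one hn]; linarith)
    rw [pn]
    linear_combination (-1 / 4 : ℝ) * hsq

lemma psi_eq_integral (n : ℕ) (p : ℝ) :
    psi n p = 1 / (2 * π) * ∫ θ in (0 : ℝ)..2 * π, (1 - 2 * (p * (1 - p)) * (1 - cos θ)) ^ n := by
  have hbase : ∀ θ, 1 - 2 * (p * (1 - p)) * (1 - cos θ) =
      p ^ 2 + (1 - p) ^ 2 + 2 * p * (1 - p) * cos θ := fun θ => by ring
  simp_rw [hbase, integral_pow_sq_add_sq_add_two_mul_mul_cos, psi]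
  field_simp

theorem phi_integral_formula_general (n : ℕ) (u : ℝ) (hun : u ≤ n / 4) :
    phi n u = (1 / (2 * π)) *
      ∫ θ in (0 : ℝ)..(2 * π), (1 - 2 * u * (1 - Real.cos θ) / n) ^ n := by
  rw [phi, psi_eq_integral, pn_mul_one_sub_pn hun]
  congr 2 with θ
  ring

theorem phi_integral_formula (n : ℕ) (u : ℝ) (hu : 0 ≤ u) (hun : u ≤ n / 4) :
    phi n u = (1 / (2 * π)) *
      ∫ θ in (0 : ℝ)..(2 * π), (1 - 2 * u * (1 - Real.cos θ) / n) ^ n :=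
  phi_integral_formula_general n u hun
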